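/- (Bernoulli case with zero cost or cost at least one) Let n ≥ 1 and let X_1, ..., X_n be i.i.d. Bernoulli random variables, i.e. P(X_1 = 1) = p = 1 - P(X_1 = 0) for some 0 ≤ p ≤ 1. If c = 0 or c ≥ 1, then with Y_i = X_i - i·c one has M(Y_1,...,Y_n) - V(Y_1,...,Y_n) = 0; in the case c = 0 the stopping rule τ = inf{i : X_i = 1 or i = n} secures the prophet's return, and in the case c ≥ 1 the stopping rule τ ≡ 1 does. -/

import Mathlib

/-!
A prophet gains nothing over a statistician who can stop at an index attaining the maximum.
With `0/1`-valued observations and `c = 0`, stopping at the first success (or at `n`) attains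
`max X_i`. With `c ≥ 1`, the penalty `(i - 1) c ≥ 1` for waiting always outweighs the possible
gain `X_i - X_1 ≤ 1`, so `Y_1` is already the maximum.
-/

open MeasureTheory ProbabilityTheory

/-- The σ-algebra generated by `Y 1, ..., Y i`. -/
def priorSigma {Ω : Type*} (Y : ℕ → Ω → ℝ) (i : ℕ) : MeasurableSpace Ω :=
  ⨆ j ∈ Finset.Icc 1 i, MeasurableSpace.comap (Y j) Real.measurableSpace

/-- `τ` is a stopping rule for `Y 1, ..., Y n`: it takes values in `{1, ..., n}` and
each event `{τ = i}` depends only on `Y 1, ..., Y i`. -/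
def IsStopRule {Ω : Type*} (Y : ℕ → Ω → ℝ) (n : ℕ) (τ : Ω → ℕ) : Prop :=
  (∀ ω, τ ω ∈ Finset.Icc 1 n) ∧
  ∀ i ∈ Finset.Icc 1 n, MeasurableSet[priorSigma Y i] {ω | τ ω = i}

/-- `V(Y_1,...,Y_n) = sup_τ E(Y_τ)`: the optimal expected return of the statistician. -/
noncomputable def Vn {Ω : Type*} [MeasurableSpace Ω] (μ : Measure Ω)
    (Y : ℕ → Ω → ℝ) (n : ℕ) : ℝ :=
  sSup {r | ∃ τ, IsStopRule Y n τ ∧ r = ∫ ω, Y (τ ω) ω ∂μ}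

/-- `M(Y_1,...,Y_n) = E(max_{1 ≤ i ≤ n} Y_i)`: the expected return of the prophet. -/
noncomputable def Mn {Ω : Type*} [MeasurableSpace Ω] (μ : Measure Ω)
    (Y : ℕ → Ω → ℝ) (n : ℕ) : ℝ :=
  ∫ ω, sSup ((fun i => Y i ω) '' Set.Icc 1 n) ∂μ

section StoppingRules

variable {Ω : Type*} {Y : ℕ → Ω → ℝ} {n : ℕ} {τ : Ω → ℕ}

lemma comap_le_priorSigma {i j : ℕ} (hj : j ∈ Finset.Icc 1 i) :
    MeasurableSpace.comap (Y j) Real.measurableSpace ≤ priorSigma Y i :=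
  le_iSup₂ (f := fun k (_ : k ∈ Finset.Icc 1 i) => MeasurableSpace.comap (Y k) _) j hj

lemma isStopRule_const {k : ℕ} (hk : k ∈ Finset.Icc 1 n) : IsStopRule Y n fun _ => k := by
  refine ⟨fun _ => hk, fun i _ => ?_⟩
  by_cases hki : k = i <;> simp [hki]

variable [MeasurableSpace Ω] {μ : Measure Ω}

lemma priorSigma_le (hmeas : ∀ i, Measurable (Y i)) (i : ℕ) :
    priorSigma Y i ≤ ‹MeasurableSpace Ω› :=
  iSup₂_le fun j _ => (hmeas j).comap_le

lemma IsStopRule.measurableSet_eq (hτ : IsStopRule Y n τ) (hmeas : ∀ i, Measurable (Y i))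
    (i : ℕ) : MeasurableSet {ω | τ ω = i} := by
  by_cases hi : i ∈ Finset.Icc 1 n
  · exact priorSigma_le hmeas i _ (hτ.2 i hi)
  · convert MeasurableSet.empty
    ext ω
    simpa using fun h : τ ω = i => hi (h ▸ hτ.1 ω)

lemma IsStopRule.integrable_stopped (hτ : IsStopRule Y n τ) (hmeas : ∀ i, Measurable (Y i))
    (hint : ∀ i ∈ Finset.Icc 1 n, Integrable (Y i) μ) :
    Integrable (fun ω => Y (τ ω) ω) μ := by
  have hsum : (fun ω => Y (τ ω) ω) =
      fun ω => ∑ i ∈ Finset.Icc 1 n, {ω | τ ω = i}.indicator (Y i) ω := by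
    ext ω
    rw [Finset.sum_eq_single_of_mem (τ ω) (hτ.1 ω)]
    · simp
    · intro i _ hi
      simp [Ne.symm hi]
  rw [hsum]
  exact integrable_finsetSum _ fun i hi => (hint i hi).indicator (hτ.measurableSet_eq hmeas i)

lemma integrable_finset_sup' {ι : Type*} {s : Finset ι} (hs : s.Nonempty) {f : ι → Ω → ℝ}
    (hint : ∀ i ∈ s, Integrable (f i) μ) :
    Integrable (fun ω => s.sup' hs fun i => f i ω) μ := by
  simp_rw [← Finset.sup'_apply]
  exact Finset.sup'_induction (p := fun g => Integrable g μ) hs f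
    (fun _ h₁ _ h₂ => h₁.sup h₂) hint

lemma Mn_eq_integral_sup' (hn : 1 ≤ n) :
    Mn μ Y n = ∫ ω, (Finset.Icc 1 n).sup' (Finset.nonempty_Icc.mpr hn) (fun i => Y i ω) ∂μ := by
  simp_rw [Finset.sup'_eq_csSup_image, Finset.coe_Icc]
  rfl

lemma IsStopRule.integral_stopped_le_Mn (hτ : IsStopRule Y n τ) (hn : 1 ≤ n)
    (hmeas : ∀ i, Measurable (Y i)) (hint : ∀ i ∈ Finset.Icc 1 n, Integrable (Y i) μ) :
    ∫ ω, Y (τ ω) ω ∂μ ≤ Mn μ Y n := by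
  rw [Mn_eq_integral_sup' hn]
  exact integral_mono (hτ.integrable_stopped hmeas hint) (integrable_finset_sup' _ hint)
    fun ω => Finset.le_sup' (fun i => Y i ω) (hτ.1 ω)

lemma IsStopRule.integral_stopped_eq_Mn (hτ : IsStopRule Y n τ)
    (hmax : ∀ᵐ ω ∂μ, ∀ i ∈ Finset.Icc 1 n, Y i ω ≤ Y (τ ω) ω) :
    ∫ ω, Y (τ ω) ω ∂μ = Mn μ Y n := by
  refine integral_congr_ae ?_
  filter_upwards [hmax] with ω hω
  refine (IsGreatest.csSup_eq (s := (fun i => Y i ω) '' Set.Icc 1 n) ⟨⟨τ ω, ?_, rfl⟩, ?_⟩).symm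
  · simpa using hτ.1 ω
  · rintro _ ⟨i, hi, rfl⟩
    exact hω i (by simpa using hi)

lemma IsStopRule.Vn_eq_Mn (hτ : IsStopRule Y n τ) (hn : 1 ≤ n)
    (hmeas : ∀ i, Measurable (Y i)) (hint : ∀ i ∈ Finset.Icc 1 n, Integrable (Y i) μ)
    (hmax : ∀ᵐ ω ∂μ, ∀ i ∈ Finset.Icc 1 n, Y i ω ≤ Y (τ ω) ω) :
    Vn μ Y n = Mn μ Y n := by
  refine IsGreatest.csSup_eq ⟨⟨τ, hτ, (hτ.integral_stopped_eq_Mn hmax).symm⟩, ?_⟩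
  rintro _ ⟨σ, hσ, rfl⟩
  exact hσ.integral_stopped_le_Mn hn hmeas hint

end StoppingRules

section FirstSuccess

variable {Ω : Type*} {X : ℕ → Ω → ℝ} {n : ℕ}

variable (X n) in
noncomputable def firstSuccess (ω : Ω) : ℕ :=
  sInf {i | (1 ≤ i ∧ X i ω = 1) ∨ i = n}

lemma firstSuccess_spec (ω : Ω) :
    (1 ≤ firstSuccess X n ω ∧ X (firstSuccess X n ω) ω = 1) ∨ firstSuccess X n ω = n :=
  Nat.sInf_mem (s := {i | (1 ≤ i ∧ X i ω = 1) ∨ i = n}) ⟨n, Or.inr rfl⟩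

lemma firstSuccess_le (ω : Ω) : firstSuccess X n ω ≤ n :=
  Nat.sInf_le (Or.inr rfl)

lemma firstSuccess_le_of_eq_one {ω : Ω} {i : ℕ} (hi : 1 ≤ i) (hX : X i ω = 1) :
    firstSuccess X n ω ≤ i :=
  Nat.sInf_le (Or.inl ⟨hi, hX⟩)

lemma firstSuccess_mem_Icc (hn : 1 ≤ n) (ω : Ω) : firstSuccess X n ω ∈ Finset.Icc 1 n := by
  refine Finset.mem_Icc.2 ⟨?_, firstSuccess_le ω⟩
  rcases firstSuccess_spec (X := X) (n := n) ω with ⟨h, -⟩ | h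
  · exact h
  · omega

lemma firstSuccess_eq_iff {ω : Ω} {i : ℕ} (hi : 1 ≤ i) (hin : i ≤ n) :
    firstSuccess X n ω = i ↔ (X i ω = 1 ∨ i = n) ∧ ∀ j ∈ Finset.Ico 1 i, X j ω ≠ 1 := by
  constructor
  · rintro rfl
    refine ⟨(firstSuccess_spec ω).imp_left And.right, fun j hj hXj => ?_⟩
    obtain ⟨hj1, hji⟩ := Finset.mem_Ico.1 hj
    exact (firstSuccess_le_of_eq_one hj1 hXj).not_gt hji
  · rintro ⟨hsucc, hbefore⟩
    refine le_antisymm (Nat.sInf_le (hsucc.imp_left fun h => ⟨hi, h⟩)) (not_lt.1 fun hlt => ?_)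
    rcases firstSuccess_spec (X := X) (n := n) ω with ⟨h1, hX⟩ | hτn
    · exact hbefore _ (Finset.mem_Ico.2 ⟨h1, hlt⟩) hX
    · omega

lemma isStopRule_firstSuccess (hn : 1 ≤ n) : IsStopRule X n (firstSuccess X n) := by
  refine ⟨firstSuccess_mem_Icc hn, fun i hi => ?_⟩
  obtain ⟨hi1, hin⟩ := Finset.mem_Icc.1 hi
  have hsucc : ∀ j ∈ Finset.Icc 1 i, MeasurableSet[priorSigma X i] {ω | X j ω = 1} :=
    fun j hj => comap_le_priorSigma hj _ ⟨{1}, measurableSet_singleton 1, rfl⟩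
  have heq : {ω | firstSuccess X n ω = i} =
      ({ω | X i ω = 1} ∪ {_ω | i = n}) ∩ ⋂ j ∈ Finset.Ico 1 i, {ω | X j ω = 1}ᶜ := by
    ext ω
    simp [firstSuccess_eq_iff hi1 hin]
  rw [heq]
  exact ((hsucc i (Finset.mem_Icc.2 ⟨hi1, le_rfl⟩)).union (.const _)).inter
    (Finset.measurableSet_biInter _ fun j hj => (hsucc j (Finset.Ico_subset_Icc_self hj)).compl)

lemma le_apply_firstSuccess (hn : 1 ≤ n) {ω : Ω}
    (h01 : ∀ i ∈ Finset.Icc 1 n, X i ω = 0 ∨ X i ω = 1) :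
    ∀ i ∈ Finset.Icc 1 n, X i ω ≤ X (firstSuccess X n ω) ω := by
  intro i hi
  rcases firstSuccess_spec (X := X) (n := n) ω with ⟨-, hτ⟩ | hτn
  · rcases h01 i hi with h | h <;> simp [h, hτ]
  · rcases h01 i hi with h | h
    · rcases h01 _ (firstSuccess_mem_Icc (X := X) hn ω) with h' | h' <;> simp [h, h']
    · have hle := firstSuccess_le_of_eq_one (n := n) (Finset.mem_Icc.1 hi).1 h
      rw [show firstSuccess X n ω = i by grind]

end FirstSuccess

lemma sub_mul_le_first_of_one_le {x : ℕ → ℝ} {c : ℝ} (hc : 1 ≤ c) {n : ℕ}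
    (h01 : ∀ i ∈ Finset.Icc 1 n, x i = 0 ∨ x i = 1) :
    ∀ i ∈ Finset.Icc 1 n, x i - i * c ≤ x 1 - (1 : ℕ) * c := by
  intro i hi
  obtain ⟨hi1, hin⟩ := Finset.mem_Icc.1 hi
  rcases hi1.eq_or_lt with rfl | hi2
  · rfl
  · have hx1 : 0 ≤ x 1 := by
      rcases h01 1 (Finset.mem_Icc.2 ⟨le_rfl, by omega⟩) with h | h <;> simp [h]
    have hxi : x i ≤ 1 := by rcases h01 i hi with h | h <;> simp [h]
    have hi2' : (2 : ℝ) ≤ i := by exact_mod_cast hi2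
    push_cast
    nlinarith

section Bernoulli

variable {Ω : Type*} [MeasurableSpace Ω] {μ : Measure Ω}

lemma ae_eq_zero_or_eq_one [IsProbabilityMeasure μ] {X : Ω → ℝ} (hX : Measurable X) {p : ℝ}
    (hp0 : 0 ≤ p) (hp1 : p ≤ 1) (h1 : μ {ω | X ω = 1} = ENNReal.ofReal p)
    (h0 : μ {ω | X ω = 0} = ENNReal.ofReal (1 - p)) :
    ∀ᵐ ω ∂μ, X ω = 0 ∨ X ω = 1 := by
  have hm0 : MeasurableSet {ω | X ω = 0} := hX (measurableSet_singleton 0)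
  have hm1 : MeasurableSet {ω | X ω = 1} := hX (measurableSet_singleton 1)
  have hdisj : Disjoint {ω | X ω = 0} {ω | X ω = 1} :=
    Set.disjoint_left.2 fun ω (h0 : X ω = 0) (h1 : X ω = 1) => zero_ne_one (h0.symm.trans h1)
  refine (ae_mem_iff_measure_eq (hm0.union hm1).nullMeasurableSet).2 ?_
  rw [measure_union hdisj hm1, h0, h1, ← ENNReal.ofReal_add (by linarith) hp0, measure_univ]
  norm_num

lemma ae_forall_eq_zero_or_eq_one {X : ℕ → Ω → ℝ} {n : ℕ}
    (hident : ∀ i ∈ Set.Icc 1 n, IdentDistrib (X i) (X 1) μ μ)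
    (h01 : ∀ᵐ ω ∂μ, X 1 ω = 0 ∨ X 1 ω = 1) :
    ∀ᵐ ω ∂μ, ∀ i ∈ Finset.Icc 1 n, X i ω = 0 ∨ X i ω = 1 := by
  rw [Filter.eventually_all_finset]
  intro i hi
  simpa using (hident i (by simpa using hi)).symm.ae_mem_snd (t := {0, 1})
    (by measurability) (by simpa using h01)

lemma integrable_of_ae_eq_zero_or_eq_one [IsFiniteMeasure μ] {X : Ω → ℝ} (hX : Measurable X)
    (h01 : ∀ᵐ ω ∂μ, X ω = 0 ∨ X ω = 1) : Integrable X μ :=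
  .of_bound hX.aestronglyMeasurable 1 (h01.mono fun ω h => by rcases h with h | h <;> simp [h])

end Bernoulli

theorem stmt19_general
    {Ω : Type*} [MeasurableSpace Ω] (μ : Measure Ω) [IsProbabilityMeasure μ]
    (n : ℕ) (X : ℕ → Ω → ℝ)
    (hmeas : ∀ i, Measurable (X i))
    (hident : ∀ i ∈ Set.Icc 1 n, IdentDistrib (X i) (X 1) μ μ)
    (c : ℝ) (Y : ℕ → Ω → ℝ) (hY : ∀ i ω, Y i ω = X i ω - i * c)
    (hn : 1 ≤ n)
    (p : ℝ) (hp0 : 0 ≤ p) (hp1 : p ≤ 1)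
    (h1 : μ {ω | X 1 ω = 1} = ENNReal.ofReal p)
    (h0 : μ {ω | X 1 ω = 0} = ENNReal.ofReal (1 - p))
    (hc : c = 0 ∨ 1 ≤ c)
    (τ0 : Ω → ℕ) (hτ0 : ∀ ω, τ0 ω = sInf {i | (1 ≤ i ∧ X i ω = 1) ∨ i = n}) :
    Mn μ Y n - Vn μ Y n = 0 ∧
    (c = 0 → ∫ ω, Y (τ0 ω) ω ∂μ = Mn μ Y n) ∧
    (1 ≤ c → ∫ ω, Y 1 ω ∂μ = Mn μ Y n) := by
  obtain rfl : τ0 = firstSuccess X n := funext hτ0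
  have h01 : ∀ᵐ ω ∂μ, ∀ i ∈ Finset.Icc 1 n, X i ω = 0 ∨ X i ω = 1 :=
    ae_forall_eq_zero_or_eq_one hident (ae_eq_zero_or_eq_one (hmeas 1) hp0 hp1 h1 h0)
  have hYmeas (i : ℕ) : Measurable (Y i) := by
    rw [funext (hY i)]
    exact (hmeas i).sub_const _
  have hYint : ∀ i ∈ Finset.Icc 1 n, Integrable (Y i) μ := fun i hi => by
    rw [funext (hY i)]
    exact (integrable_of_ae_eq_zero_or_eq_one (hmeas i) (h01.mono fun ω h => h i hi)).sub
      (integrable_const _)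
  have hfirst (hc0 : c = 0) : IsStopRule Y n (firstSuccess X n) ∧
      ∀ᵐ ω ∂μ, ∀ i ∈ Finset.Icc 1 n, Y i ω ≤ Y (firstSuccess X n ω) ω := by
    obtain rfl : Y = X := by ext i ω; simp [hY, hc0]
    exact ⟨isStopRule_firstSuccess hn, h01.mono fun ω => le_apply_firstSuccess hn⟩
  have hconst (hc1 : 1 ≤ c) : IsStopRule Y n (fun _ => 1) ∧
      ∀ᵐ ω ∂μ, ∀ i ∈ Finset.Icc 1 n, Y i ω ≤ Y 1 ω := by
    refine ⟨isStopRule_const (Finset.mem_Icc.2 ⟨le_rfl, hn⟩), h01.mono fun ω hω => ?_⟩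
    simpa only [hY] using sub_mul_le_first_of_one_le hc1 hω
  refine ⟨?_, fun hc0 => (hfirst hc0).1.integral_stopped_eq_Mn (hfirst hc0).2,
    fun hc1 => (hconst hc1).1.integral_stopped_eq_Mn (hconst hc1).2⟩
  rw [sub_eq_zero, eq_comm]
  rcases hc with hc0 | hc1
  · exact (hfirst hc0).1.Vn_eq_Mn hn hYmeas hYint (hfirst hc0).2
  · exact (hconst hc1).1.Vn_eq_Mn hn hYmeas hYint (hconst hc1).2

theorem stmt19
    {Ω : Type*} [MeasurableSpace Ω] (μ : Measure Ω) [IsProbabilityMeasure μ]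
    (n : ℕ) (X : ℕ → Ω → ℝ)
    (hmeas : ∀ i, Measurable (X i))
    (hindep : iIndepFun (fun i : Fin n => X (i.1 + 1)) μ)
    (hident : ∀ i ∈ Set.Icc 1 n, IdentDistrib (X i) (X 1) μ μ)
    (c : ℝ) (Y : ℕ → Ω → ℝ) (hY : ∀ i ω, Y i ω = X i ω - i * c)
    (hn : 1 ≤ n)
    (p : ℝ) (hp0 : 0 ≤ p) (hp1 : p ≤ 1)
    (h1 : μ {ω | X 1 ω = 1} = ENNReal.ofReal p)
    (h0 : μ {ω | X 1 ω = 0} = ENNReal.ofReal (1 - p))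
    (hc : c = 0 ∨ 1 ≤ c)
    (τ0 : Ω → ℕ) (hτ0 : ∀ ω, τ0 ω = sInf {i | (1 ≤ i ∧ X i ω = 1) ∨ i = n}) :
    Mn μ Y n - Vn μ Y n = 0 ∧
    (c = 0 → ∫ ω, Y (τ0 ω) ω ∂μ = Mn μ Y n) ∧
    (1 ≤ c → ∫ ω, Y 1 ω ∂μ = Mn μ Y n) :=
  stmt19_general μ n X hmeas hident c Y hY hn p hp0 hp1 h1 h0 hc τ0 hτ0
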